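/- Let $a<b$, let $h:[a,b]\to\mathbb{R}$ be three times continuously differentiable, attaining its maximum over $[a,b]$ only at the endpoint $c=a$, with $h'(a)\neq 0$ and $h''(a)\neq 0$. Let $k$ be a nonnegative integer and let $g:[a,b]\to\mathbb{R}$ be $(k+1)$-times continuously differentiable with $g(a)=g'(a)=\cdots=g^{(k-1)}(a)=0$ and $g^{(k)}(a)\neq 0$. Then, as $t\to\infty$, $\int_a^b e^{t h(x)} g(x)\,dx = e^{t h(a)}\Big( t^{-1-k}\, g^{(k)}(a)\, (h'(a))^{-1-k}\, (-1)^{k+1} + O(t^{-2-k})\Big)$. -/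

import Mathlib

/-!
Write `x = a + u` and `d = h'(a)`, which is negative because `a` is a maximum and `d ≠ 0`.
Taylor's theorem gives `h (a + u) - h a = d u + O(u²)` and `g (a + u) = g⁽ᵏ⁾(a)/k! uᵏ + O(uᵏ⁺¹)`,
and since the maximum is strict, the first expansion upgrades to a linear bound
`h (a + u) - h a ≤ -κ u` on all of `[0, b - a]`. Replacing `g` by its leading monomial and
`h (a + u) - h a` by `d u` therefore costs integrals dominated by
`∫ uᵐ e^{-tκu} du = m!/(tκ)^{m+1}`: with `m = k + 1` for `g`, and, through
`|eˣ - eʸ| ≤ |x - y| e^{max x y}`, with `m = k + 2` and an extra factor `t` for `h`.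
The model integral `∫₀^{b-a} uᵏ e^{tdu} du` differs from `k!/(-td)^{k+1}` by its tail beyond
`b - a`, at most `(k+1)!/((b-a)(-td)^{k+2})`. All three errors are `O(t^{-k-2})`.
-/

open Real MeasureTheory Set
open scoped Nat

lemma integrableOn_pow_mul_exp_neg_mul_Ioi (n : ℕ) {r : ℝ} (hr : 0 < r) :
    IntegrableOn (fun u : ℝ => u ^ n * exp (-(r * u))) (Ioi 0) := by
  have hn : (-1 : ℝ) < n := by linarith [n.cast_nonneg (α := ℝ)]
  refine (integrableOn_rpow_mul_exp_neg_mul_rpow hn one_pos hr).congr_fun (fun u _ => ?_)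
    measurableSet_Ioi
  simp only [rpow_one, rpow_natCast, neg_mul]

lemma integral_pow_mul_exp_neg_mul_Ioi (n : ℕ) {r : ℝ} (hr : 0 < r) :
    ∫ u in Ioi (0 : ℝ), u ^ n * exp (-(r * u)) = n ! / r ^ (n + 1) := by
  have h := integral_rpow_mul_exp_neg_mul_Ioi (a := n + 1) (by positivity) hr
  simp only [add_sub_cancel_right, rpow_natCast, Gamma_nat_eq_factorial] at h
  rw [h, ← Nat.cast_succ, rpow_natCast, div_pow, one_pow, one_div_mul_eq_div]

lemma integral_Ioi_pow_mul_exp_neg_mul_le {L r : ℝ} (hL : 0 < L) (hr : 0 < r) (n : ℕ) :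
    ∫ u in Ioi L, u ^ n * exp (-(r * u)) ≤ (n + 1)! / (L * r ^ (n + 2)) := by
  have hsub : Ioi L ⊆ Ioi 0 := Ioi_subset_Ioi hL.le
  calc ∫ u in Ioi L, u ^ n * exp (-(r * u))
      ≤ ∫ u in Ioi L, L⁻¹ * (u ^ (n + 1) * exp (-(r * u))) := by
        refine setIntegral_mono_on ((integrableOn_pow_mul_exp_neg_mul_Ioi n hr).mono_set hsub)
          (((integrableOn_pow_mul_exp_neg_mul_Ioi _ hr).mono_set hsub).const_mul _)
          measurableSet_Ioi fun u (hu : L < u) => ?_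
        have hu0 : 0 < u := hL.trans hu
        rw [le_inv_mul_iff₀ hL, pow_succ]
        nlinarith [mul_le_mul_of_nonneg_left hu.le
          (by positivity : 0 ≤ u ^ n * exp (-(r * u)))]
    _ ≤ L⁻¹ * ∫ u in Ioi 0, u ^ (n + 1) * exp (-(r * u)) := by
        rw [integral_const_mul]
        refine mul_le_mul_of_nonneg_left (setIntegral_mono_set
          (integrableOn_pow_mul_exp_neg_mul_Ioi _ hr) ?_ hsub.eventuallyLE) (inv_nonneg.2 hL.le)
        filter_upwards [self_mem_ae_restrict measurableSet_Ioi] with u (hu : 0 < u)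
        positivity
    _ = (n + 1)! / (L * r ^ (n + 2)) := by
        rw [integral_pow_mul_exp_neg_mul_Ioi _ hr]
        field_simp

lemma abs_intervalIntegral_pow_mul_exp_neg_mul_sub_le {L r : ℝ} (hL : 0 < L) (hr : 0 < r)
    (n : ℕ) :
    |(∫ u in 0..L, u ^ n * exp (-(r * u))) - n ! / r ^ (n + 1)| ≤
      (n + 1)! / (L * r ^ (n + 2)) := by
  have hint := integrableOn_pow_mul_exp_neg_mul_Ioi n hr
  have hsplit : (∫ u in 0..L, u ^ n * exp (-(r * u))) + ∫ u in Ioi L, u ^ n * exp (-(r * u)) =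
      n ! / r ^ (n + 1) := by
    rw [intervalIntegral.integral_of_le hL.le, ← setIntegral_union (Ioc_disjoint_Ioi le_rfl)
      measurableSet_Ioi (hint.mono_set Ioc_subset_Ioi_self)
      (hint.mono_set (Ioi_subset_Ioi hL.le)), Ioc_union_Ioi_eq_Ioi hL.le,
      integral_pow_mul_exp_neg_mul_Ioi n hr]
  have htail : 0 ≤ ∫ u in Ioi L, u ^ n * exp (-(r * u)) :=
    setIntegral_nonneg measurableSet_Ioi fun u (hu : L < u) => by
      have : 0 < u := hL.trans hu
      positivity
  rw [← hsplit, sub_add_cancel_left, abs_neg, abs_of_nonneg htail]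
  exact integral_Ioi_pow_mul_exp_neg_mul_le hL hr n

lemma abs_intervalIntegral_le_of_abs_le_pow_mul_exp {F : ℝ → ℝ} {L r K : ℝ} (hL : 0 < L)
    (hr : 0 < r) (m : ℕ) (hF : ∀ u ∈ Ioc 0 L, |F u| ≤ K * (u ^ m * exp (-(r * u)))) :
    |∫ u in 0..L, F u| ≤ K * (m ! / r ^ (m + 1)) := by
  have hK : 0 ≤ K :=
    nonneg_of_mul_nonneg_left ((abs_nonneg _).trans (hF L ⟨hL, le_rfl⟩)) (by positivity)
  have hmaj : IntervalIntegrable (fun u => K * (u ^ m * exp (-(r * u)))) volume 0 L :=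
    (by fun_prop : Continuous fun u => K * (u ^ m * exp (-(r * u)))).intervalIntegrable _ _
  calc |∫ u in 0..L, F u| ≤ ∫ u in 0..L, K * (u ^ m * exp (-(r * u))) :=
        intervalIntegral.norm_integral_le_of_norm_le (f := F) hL.le (ae_of_all _ hF) hmaj
    _ = K * ∫ u in Ioc 0 L, u ^ m * exp (-(r * u)) := by
        rw [intervalIntegral.integral_const_mul, intervalIntegral.integral_of_le hL.le]
    _ ≤ K * (m ! / r ^ (m + 1)) := by
        rw [← integral_pow_mul_exp_neg_mul_Ioi m hr]
        refine mul_le_mul_of_nonneg_left (setIntegral_mono_set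
          (integrableOn_pow_mul_exp_neg_mul_Ioi m hr) ?_ Ioc_subset_Ioi_self.eventuallyLE) hK
        filter_upwards [self_mem_ae_restrict measurableSet_Ioi] with u (hu : 0 < u)
        positivity

lemma abs_exp_sub_exp_le (x y : ℝ) : |exp x - exp y| ≤ |x - y| * exp (max x y) := by
  wlog hxy : y ≤ x generalizing x y
  · rw [abs_sub_comm, abs_sub_comm x, max_comm]
    exact this y x (le_of_not_ge hxy)
  rw [max_eq_left hxy, abs_of_nonneg (sub_nonneg.2 hxy),
    abs_of_nonneg (sub_nonneg.2 (exp_le_exp.2 hxy))]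
  have hy : exp y = exp x * exp (y - x) := by rw [← exp_add, add_sub_cancel]
  nlinarith [add_one_le_exp (y - x), exp_pos x]

lemma abs_exp_mul_sub_exp_le_of_abs_sub_le {t u y d κ M : ℝ} (ht : 0 ≤ t) (hu : 0 ≤ u)
    (hκd : κ ≤ -d) (hy : y ≤ -κ * u) (hyd : |y - d * u| ≤ M * u ^ 2) :
    |exp (t * y) - exp (-(t * -d * u))| ≤ t * (M * u ^ 2) * exp (-(t * κ * u)) := by
  refine (abs_exp_sub_exp_le _ _).trans (mul_le_mul ?_ (exp_le_exp.2 (max_le ?_ ?_))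
    (exp_pos _).le (mul_nonneg ht ((abs_nonneg _).trans hyd)))
  · rw [show t * y - -(t * -d * u) = t * (y - d * u) by ring, abs_mul, abs_of_nonneg ht]
    exact mul_le_mul_of_nonneg_left hyd ht
  · nlinarith
  · nlinarith [mul_nonneg ht hu]

lemma taylorWithinEval_eq_of_iteratedDerivWithin_eq_zero {f : ℝ → ℝ} {s : Set ℝ} {a : ℝ}
    {k : ℕ} (hf : ∀ i < k, iteratedDerivWithin i f s a = 0) (x : ℝ) :
    taylorWithinEval f k s a x = iteratedDerivWithin k f s a / k ! * (x - a) ^ k := by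
  rw [taylor_within_apply, Finset.sum_eq_single_of_mem k (Finset.self_mem_range_succ k)]
  · rw [smul_eq_mul]
    field_simp
  · intro i hi hik
    rw [hf i (lt_of_le_of_ne (Nat.lt_succ_iff.mp (Finset.mem_range.mp hi)) hik), smul_zero]

lemma exists_abs_sub_monomial_le {g : ℝ → ℝ} {a b : ℝ} {k : ℕ} (hab : a ≤ b)
    (hg : ContDiffOn ℝ (k + 1) g (Icc a b))
    (hvanish : ∀ i < k, iteratedDerivWithin i g (Icc a b) a = 0) :
    ∃ M, ∀ x ∈ Icc a b, |g x - iteratedDerivWithin k g (Icc a b) a / k ! * (x - a) ^ k| ≤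
      M * (x - a) ^ (k + 1) := by
  simpa only [taylorWithinEval_eq_of_iteratedDerivWithin_eq_zero hvanish, Real.norm_eq_abs]
    using exists_taylor_mean_remainder_bound hab hg

lemma exists_abs_sub_linear_le_sq {h : ℝ → ℝ} {a b : ℝ} (hab : a ≤ b)
    (hh : ContDiffOn ℝ 2 h (Icc a b)) :
    ∃ M, ∀ x ∈ Icc a b,
      |h x - h a - derivWithin h (Icc a b) a * (x - a)| ≤ M * (x - a) ^ 2 := by
  have htaylor : ∀ x, taylorWithinEval h 1 (Icc a b) a x =
      h a + derivWithin h (Icc a b) a * (x - a) := fun x => by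
    simp [taylor_within_apply, mul_comm]
  simpa only [htaylor, Real.norm_eq_abs, sub_add_eq_sub_sub]
    using exists_taylor_mean_remainder_bound (n := 1) hab hh

lemma derivWithin_nonpos_of_isMaxOn {h : ℝ → ℝ} {a b : ℝ} (hab : a < b)
    (hmax : IsMaxOn h (Icc a b) a) : derivWithin h (Icc a b) a ≤ 0 := by
  have hcone : b - a ∈ posTangentConeAt (Icc a b) a :=
    sub_mem_posTangentConeAt_of_segment_subset ((segment_eq_Icc hab.le).trans_subset le_rfl)
  have h1 := hmax.localize.fderivWithin_nonpos hcone
  rw [show b - a = (b - a) • (1 : ℝ) by simp, map_smul, smul_eq_mul] at h1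
  exact nonpos_of_mul_nonpos_right h1 (sub_pos.2 hab)

lemma exists_sub_le_neg_mul_of_forall_lt {h : ℝ → ℝ} {a b d M : ℝ} (hab : a < b)
    (hd : d < 0)     (hc : ContinuousOn h (Icc a b)) (hmax : ∀ x ∈ Icc a b, x ≠ a → h x < h a)
    (hT : ∀ x ∈ Icc a b, |h x - h a - d * (x - a)| ≤ M * (x - a) ^ 2) :
    ∃ κ > 0, κ ≤ -d ∧ ∀ x ∈ Icc a b, h x - h a ≤ -κ * (x - a) := by
  set η := min (b - a) (-d / (2 * (|M| + 1)))
  have hη : 0 < η := lt_min (sub_pos.2 hab) (div_pos (neg_pos.2 hd) (by positivity))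
  have hnear : ∀ x ∈ Icc a b, x ≤ a + η → h x - h a ≤ d / 2 * (x - a) := by
    intro x hx hxη
    have hMx : (|M| + 1) * (x - a) ≤ -d / 2 := by
      have := (le_div_iff₀' (by positivity)).1
        ((show x - a ≤ η by linarith).trans (min_le_right _ _))
      linarith
    nlinarith [(abs_le.1 (hT x hx)).2, le_abs_self M, hx.1]
  have hηb : a + η ≤ b := by linarith [min_le_left (b - a) (-d / (2 * (|M| + 1)))]
  obtain ⟨x₀, hx₀, hx₀max⟩ := isCompact_Icc.exists_isMaxOn (nonempty_Icc.2 hηb)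
    (hc.mono (Icc_subset_Icc_left (by linarith) : Icc (a + η) b ⊆ Icc a b))
  have hδ : 0 < h a - h x₀ :=
    sub_pos.2 (hmax x₀ ⟨by linarith [hx₀.1], hx₀.2⟩ (by linarith [hx₀.1]))
  set κ := min (-d / 2) ((h a - h x₀) / (b - a))
  have hκ : 0 < κ := lt_min (by linarith) (div_pos hδ (sub_pos.2 hab))
  refine ⟨κ, hκ, (min_le_left _ _).trans (by linarith), fun x hx => ?_⟩
  rcases le_or_gt x (a + η) with hxη | hxη
  · nlinarith [hnear x hx hxη, min_le_left (-d / 2) ((h a - h x₀) / (b - a)), hx.1]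
  · have hfar : h x ≤ h x₀ := hx₀max ⟨hxη.le, hx.2⟩
    have hκδ : κ * (b - a) ≤ h a - h x₀ :=
      (le_div_iff₀ (sub_pos.2 hab)).1 (min_le_right _ _)
    nlinarith [hx.2, hx.1]

theorem exists_abs_intervalIntegral_exp_mul_sub_le {f g : ℝ → ℝ} {L d κ c Mf Mg : ℝ}
    (k : ℕ) (hL : 0 < L) (hκ : 0 < κ) (hκd : κ ≤ -d)
    (hfc : ContinuousOn f (Icc 0 L)) (hgc : ContinuousOn g (Icc 0 L))
    (hdecay : ∀ u ∈ Ioc 0 L, f u ≤ -κ * u)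
    (hf : ∀ u ∈ Ioc 0 L, |f u - d * u| ≤ Mf * u ^ 2)
    (hg : ∀ u ∈ Ioc 0 L, |g u - c * u ^ k| ≤ Mg * u ^ (k + 1)) :
    ∃ C, ∀ t > 0, |(∫ u in 0..L, exp (t * f u) * g u) - c * k ! / (t * -d) ^ (k + 1)| ≤
      C / t ^ (k + 2) := by
  refine ⟨Mg * (k + 1)! / κ ^ (k + 2) + |c| * Mf * (k + 2)! / κ ^ (k + 3) +
    |c| * (k + 1)! / (L * (-d) ^ (k + 2)), fun t ht => ?_⟩
  set r := t * -d
  have hr : 0 < r := mul_pos ht (hκ.trans_le hκd)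
  set P := fun u => exp (t * f u) * (g u - c * u ^ k)
  set Q := fun u => c * ((exp (t * f u) - exp (-(r * u))) * u ^ k)
  set W := fun u : ℝ => u ^ k * exp (-(r * u))
  have hint : ∀ F : ℝ → ℝ, ContinuousOn F (Icc 0 L) → IntervalIntegrable F volume 0 L :=
    fun F hF => (uIcc_of_le hL.le ▸ hF).intervalIntegrable
  have hsplit : (∫ u in 0..L, exp (t * f u) * g u) =
      (∫ u in 0..L, P u) + (∫ u in 0..L, Q u) + c * ∫ u in 0..L, W u := by
    rw [← intervalIntegral.integral_const_mul, ← intervalIntegral.integral_add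
      (hint P (by fun_prop)) (hint Q (by fun_prop)), ← intervalIntegral.integral_add
      ((hint P (by fun_prop)).add (hint Q (by fun_prop))) (hint _ (by fun_prop))]
    refine intervalIntegral.integral_congr fun u _ => ?_
    simp only [P, Q, W]
    ring
  have hP : |∫ u in 0..L, P u| ≤ Mg * ((k + 1)! / (t * κ) ^ (k + 1 + 1)) := by
    refine abs_intervalIntegral_le_of_abs_le_pow_mul_exp hL (mul_pos ht hκ) _ fun u hu => ?_
    have hexp : exp (t * f u) ≤ exp (-(t * κ * u)) := by
      have := mul_le_mul_of_nonneg_left (hdecay u hu) ht.le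
      exact exp_le_exp.2 (by linarith)
    calc |P u| = exp (t * f u) * |g u - c * u ^ k| := by rw [abs_mul, abs_of_pos (exp_pos _)]
      _ ≤ exp (-(t * κ * u)) * (Mg * u ^ (k + 1)) :=
          mul_le_mul hexp (hg u hu) (abs_nonneg _) (exp_pos _).le
      _ = Mg * (u ^ (k + 1) * exp (-(t * κ * u))) := by ring
  have hQ : |∫ u in 0..L, Q u| ≤ |c| * t * Mf * ((k + 2)! / (t * κ) ^ (k + 2 + 1)) := by
    refine abs_intervalIntegral_le_of_abs_le_pow_mul_exp hL (mul_pos ht hκ) _ fun u hu => ?_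
    have hu0 := hu.1.le
    calc |Q u| = |c| * (|exp (t * f u) - exp (-(r * u))| * u ^ k) := by
          rw [abs_mul, abs_mul, abs_of_nonneg (pow_nonneg hu0 k)]
      _ ≤ |c| * (t * (Mf * u ^ 2) * exp (-(t * κ * u)) * u ^ k) := by
          gcongr
          exact abs_exp_mul_sub_exp_le_of_abs_sub_le ht.le hu0 hκd (hdecay u hu) (hf u hu)
      _ = |c| * t * Mf * (u ^ (k + 2) * exp (-(t * κ * u))) := by ring
  have hW := abs_intervalIntegral_pow_mul_exp_neg_mul_sub_le hL hr k
  rw [hsplit]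
  calc |(∫ u in 0..L, P u) + (∫ u in 0..L, Q u) + c * (∫ u in 0..L, W u) -
        c * k ! / r ^ (k + 1)|
      ≤ |∫ u in 0..L, P u| + |∫ u in 0..L, Q u| +
          |c| * |(∫ u in 0..L, W u) - k ! / r ^ (k + 1)| := by
        rw [← abs_mul, mul_sub, mul_div_assoc, add_sub_assoc]
        exact abs_add_three _ _ _
    _ ≤ Mg * ((k + 1)! / (t * κ) ^ (k + 1 + 1)) +
          |c| * t * Mf * ((k + 2)! / (t * κ) ^ (k + 2 + 1)) +
          |c| * ((k + 1)! / (L * r ^ (k + 2))) := by gcongr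
    _ = _ := by
        have : -d ≠ 0 := (hκ.trans_le hκd).ne'
        simp only [r, mul_pow]
        field_simp
        ring

theorem exists_abs_integral_exp_mul_sub_le {h g : ℝ → ℝ} {a b d κ c Mh Mg : ℝ} (k : ℕ)
    (hab : a < b) (hκ : 0 < κ) (hκd : κ ≤ -d)
    (hhc : ContinuousOn h (Icc a b)) (hgc : ContinuousOn g (Icc a b))
    (hdecay : ∀ x ∈ Icc a b, h x - h a ≤ -κ * (x - a))
    (hh : ∀ x ∈ Icc a b, |h x - h a - d * (x - a)| ≤ Mh * (x - a) ^ 2)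
    (hg : ∀ x ∈ Icc a b, |g x - c * (x - a) ^ k| ≤ Mg * (x - a) ^ (k + 1)) :
    ∃ C, ∀ t > 0, |(∫ x in a..b, exp (t * h x) * g x) -
      exp (t * h a) * (c * k ! / (t * -d) ^ (k + 1))| ≤ C * exp (t * h a) / t ^ (k + 2) := by
  have hmaps : MapsTo (a + ·) (Icc 0 (b - a)) (Icc a b) :=
    fun u hu => ⟨by linarith [hu.1], by linarith [hu.2]⟩
  have hmem : ∀ u ∈ Ioc 0 (b - a), a + u ∈ Icc a b :=
    fun u hu => hmaps (Ioc_subset_Icc_self hu)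
  obtain ⟨C, hC⟩ := exists_abs_intervalIntegral_exp_mul_sub_le (f := fun u => h (a + u) - h a)
    (g := fun u => g (a + u)) k (sub_pos.2 hab) hκ hκd
    ((hhc.comp (by fun_prop) hmaps).sub continuousOn_const) (hgc.comp (by fun_prop) hmaps)
    (fun u hu => by simpa using hdecay _ (hmem u hu))
    (fun u hu => by simpa using hh _ (hmem u hu)) (fun u hu => by simpa using hg _ (hmem u hu))
  refine ⟨C, fun t ht => ?_⟩
  have hshift : (∫ x in a..b, exp (t * h x) * g x) =
      exp (t * h a) * ∫ u in 0..b - a, exp (t * (h (a + u) - h a)) * g (a + u) := by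
    rw [← intervalIntegral.integral_const_mul, intervalIntegral.integral_comp_add_left
      (fun x => exp (t * h a) * (exp (t * (h x - h a)) * g x)), add_zero, add_sub_cancel]
    refine intervalIntegral.integral_congr fun x _ => ?_
    rw [← mul_assoc, ← exp_add]
    ring_nf
  rw [hshift, ← mul_sub, abs_mul, abs_of_pos (exp_pos _), mul_comm C,
    mul_div_assoc (exp (t * h a))]
  exact mul_le_mul_of_nonneg_left (hC t ht) (exp_pos _).le

lemma rpow_neg_natCast_sub_natCast {t : ℝ} (ht : 0 ≤ t) (m k : ℕ) :
    t ^ (-(m : ℝ) - k) = (t ^ (m + k))⁻¹ := by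
  rw [← neg_add', ← Nat.cast_add, rpow_neg ht, rpow_natCast]

lemma zpow_neg_one_sub_natCast_mul_neg_one_pow (d : ℝ) (k : ℕ) :
    d ^ (-1 - (k : ℤ)) * (-1) ^ (k + 1) = ((-d) ^ (k + 1))⁻¹ := by
  rw [show -1 - (k : ℤ) = -((k + 1 : ℕ) : ℤ) by push_cast; ring, zpow_neg, zpow_natCast,
    neg_pow d, mul_inv, mul_comm, ← inv_pow (-1 : ℝ), inv_neg, inv_one]

theorem laplace_left_endpoint_noncritical_general
    (a b : ℝ) (hab : a < b)
    (h g : ℝ → ℝ) (k : ℕ)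
    (hh : ContDiffOn ℝ 3 h (Set.Icc a b))
    (hmax : ∀ x ∈ Set.Icc a b, x ≠ a → h x < h a)
    (hh1 : derivWithin h (Set.Icc a b) a ≠ 0)
    (hg : ContDiffOn ℝ (k + 1) g (Set.Icc a b))
    (hgvanish : ∀ i < k, iteratedDerivWithin i g (Set.Icc a b) a = 0) :
    ∃ C > 0, ∃ T > 0, ∀ t > T,
      |(∫ x in a..b, Real.exp (t * h x) * g x) -
        Real.exp (t * h a) * t ^ (-(1 : ℝ) - (k : ℝ)) *
          iteratedDerivWithin k g (Set.Icc a b) a *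
          (derivWithin h (Set.Icc a b) a) ^ (-1 - (k : ℤ)) * (-1 : ℝ) ^ (k + 1)| ≤
        C * Real.exp (t * h a) * t ^ (-(2 : ℝ) - (k : ℝ)) := by
  set d := derivWithin h (Icc a b) a
  set G := iteratedDerivWithin k g (Icc a b) a
  have hmaxOn : IsMaxOn h (Icc a b) a := fun x hx => show h x ≤ h a by
    rcases eq_or_ne x a with rfl | hxa
    exacts [le_rfl, (hmax x hx hxa).le]
  have hd : d < 0 := (derivWithin_nonpos_of_isMaxOn hab hmaxOn).lt_of_ne hh1
  obtain ⟨Mh, hMh⟩ := exists_abs_sub_linear_le_sq hab.le (hh.of_le (by norm_num))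
  obtain ⟨Mg, hMg⟩ := exists_abs_sub_monomial_le hab.le hg hgvanish
  obtain ⟨κ, hκ, hκd, hdecay⟩ :=
    exists_sub_le_neg_mul_of_forall_lt hab hd hh.continuousOn hmax hMh
  obtain ⟨C, hC⟩ := exists_abs_integral_exp_mul_sub_le k hab hκ hκd hh.continuousOn
    hg.continuousOn hdecay hMh hMg
  refine ⟨|C| + 1, by positivity, 1, one_pos, fun t ht => ?_⟩
  have ht0 : 0 < t := one_pos.trans ht
  have ht1 : t ^ (-(1 : ℝ) - k) = (t ^ (1 + k))⁻¹ := by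
    exact_mod_cast rpow_neg_natCast_sub_natCast ht0.le 1 k
  have ht2 : t ^ (-(2 : ℝ) - k) = (t ^ (2 + k))⁻¹ := by
    exact_mod_cast rpow_neg_natCast_sub_natCast ht0.le 2 k
  have hlead : exp (t * h a) * t ^ (-(1 : ℝ) - k) * G * d ^ (-1 - (k : ℤ)) * (-1) ^ (k + 1) =
      exp (t * h a) * (G / k ! * k ! / (t * -d) ^ (k + 1)) := by
    rw [mul_assoc _ (d ^ _), zpow_neg_one_sub_natCast_mul_neg_one_pow, ht1, mul_pow]
    field_simp
    ring
  rw [hlead, ht2, add_comm 2 k, ← div_eq_mul_inv]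
  refine (hC t ht0).trans (div_le_div_of_nonneg_right ?_ (by positivity))
  exact mul_le_mul_of_nonneg_right ((le_abs_self C).trans (by linarith)) (exp_pos _).le

/-- Laplace's method, maximum at the left endpoint `a` with `h'(a) ≠ 0`:
`∫ e^{th} g = e^{th(a)} (t^(-1-k) g^(k)(a) (h'(a))^(-1-k) (-1)^(k+1) + O(t^(-2-k)))`. -/
theorem laplace_left_endpoint_noncritical
    (a b : ℝ) (hab : a < b)
    (h g : ℝ → ℝ) (k : ℕ)
    (hh : ContDiffOn ℝ 3 h (Set.Icc a b))
    (hmax : ∀ x ∈ Set.Icc a b, x ≠ a → h x < h a)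
    (hh1 : derivWithin h (Set.Icc a b) a ≠ 0)
    (hh2 : iteratedDerivWithin 2 h (Set.Icc a b) a ≠ 0)
    (hg : ContDiffOn ℝ (k + 1) g (Set.Icc a b))
    (hgvanish : ∀ i < k, iteratedDerivWithin i g (Set.Icc a b) a = 0)
    (hgk : iteratedDerivWithin k g (Set.Icc a b) a ≠ 0) :
    ∃ C > 0, ∃ T > 0, ∀ t > T,
      |(∫ x in a..b, Real.exp (t * h x) * g x) -
        Real.exp (t * h a) * t ^ (-(1 : ℝ) - (k : ℝ)) *
          iteratedDerivWithin k g (Set.Icc a b) a *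
          (derivWithin h (Set.Icc a b) a) ^ (-1 - (k : ℤ)) * (-1 : ℝ) ^ (k + 1)| ≤
        C * Real.exp (t * h a) * t ^ (-(2 : ℝ) - (k : ℝ)) :=
  laplace_left_endpoint_noncritical_general a b hab h g k hh hmax hh1 hg hgvanish
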